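/- Let A ∈ 𝒫_π be a canonical plane matrix of type π, and for i ∈ {1,...,m_1} let V_i = ℂ[A]·e_i be the A-cyclic subspace of ℂ^n generated by the standard basis vector e_i. Set m_{t+1} = 0, s_j = l_1 + ... + l_j, and P_j = {m_1 − m_j + 1, ..., m_1 − m_{j+1}} for j = 1,...,t. Then for every j ∈ {1,...,t} and every i ∈ P_j, dim V_i = s_j. -/

import Mathlib

/- Common setup: canonical plane matrices (P. Daugulis, "A parametrization of
matrix conjugacy orbit sets as unions of affine planes"). -/

open Matrix Polynomial

noncomputable section

/-- `ℕ`-indexed entries of the generalized companion matrix `R_l(y₁,...,y_l)`: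
subdiagonal entries `1`, last column given (via Vieta) by the coefficients of
`∏ (X - yᵢ)` (entry in row `k` of the last column is
`(−1)^{l+1−k}·e_{l+1−k}(y)`), all other entries `0`. -/
def genCompE (l : ℕ) (y : Fin l → ℂ) (i j : ℕ) : ℂ :=
  if i < l ∧ j < l then
    (if i = j + 1 then 1
     else if j = l - 1 then -((∏ k, (X - C (y k))).coeff i)
     else 0)
  else 0

/-- The generalized companion matrix `R_l(y₁,...,y_l)`, i.e. the companion
matrix of `∏ (X - yᵢ)`. -/
def genComp (l : ℕ) (y : Fin l → ℂ) : Matrix (Fin l) (Fin l) ℂ :=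
  Matrix.of fun i j => genCompE l y i j

/-- A partition of `n`, recorded by its stacks: `t` stacks, with strictly
decreasing positive distinct values `m 0 > m 1 > ... > m (t-1)` and positive
lengths `l j`, so that the partition consists of `l j` copies of `m j` and
`n = ∑ j, l j * m j`. -/
structure StackPartition (n : ℕ) where
  t : ℕ
  m : Fin t → ℕ
  l : Fin t → ℕ
  m_pos : ∀ j, 0 < m j
  l_pos : ∀ j, 0 < l j
  m_strictAnti : ∀ i j : Fin t, i < j → m j < m i
  sum_eq : (∑ j, l j * m j) = n

namespace StackPartition

variable {n : ℕ} (P : StackPartition n)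

/-- `m j` extended by `0` beyond the number of stacks (`0`-indexed), so
`mE 0 = m_1` and `mE t = m_{t+1} = 0` in the paper's notation. -/
def mE (j : ℕ) : ℕ := if h : j < P.t then P.m ⟨j, h⟩ else 0

/-- Row/column offset of the `j`-th diagonal block (`0`-indexed):
`S j = ∑_{i<j} l i * m i`. -/
def S (j : ℕ) : ℕ := ∑ i : Fin P.t, if (i : ℕ) < j then P.l i * P.m i else 0

/-- `sE j = ∑_{i<j} l i`; the paper's `s_j` (for `1`-indexed `j`) is `sE j`. -/
def sE (j : ℕ) : ℕ := ∑ i : Fin P.t, if (i : ℕ) < j then P.l i else 0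

/-- The multiset of addends of the partition. -/
def parts : Multiset ℕ := ∑ j : Fin P.t, Multiset.replicate (P.l j) (P.m j)

/-- Offsets for the direct sum `⊕_j (m_j - m_{j+1}) G_j`. -/
def T (k : ℕ) : ℕ :=
  ∑ i : Fin P.t, if (i : ℕ) < k then (P.m i - P.mE ((i : ℕ) + 1)) * P.sE ((i : ℕ) + 1) else 0

end StackPartition

/-- Parameters `λ_{j,1},...,λ_{j,l_j}` for each stack `j`. -/
def Params {n : ℕ} (P : StackPartition n) := (j : Fin P.t) → Fin (P.l j) → ℂ

/-- `ℕ`-indexed entry of the canonical plane matrix of type `P` with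
parameters `lam`: the `j`-th diagonal block (of size `l j * m j`, occupying
rows and columns `[S j, S (j+1))`) is `R_{l j}(lam j) ⊗ E_{m j}` (row index
`a` of the block encodes the pair `(a / m j, a % m j)`), the block directly
below it occupies the first `m (j+1)` rows of block `j+1` and the last `m j`
columns of block `j` and equals `[O | E_{m (j+1)}]`, and all other entries
vanish. -/
def cpmEntry {n : ℕ} (P : StackPartition n) (lam : Params P) (r c : ℕ) : ℂ :=
  (∑ j : Fin P.t,
    if P.S j ≤ r ∧ r < P.S ((j : ℕ) + 1) ∧ P.S j ≤ c ∧ c < P.S ((j : ℕ) + 1)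
        ∧ (r - P.S j) % P.m j = (c - P.S j) % P.m j then
      genCompE (P.l j) (lam j) ((r - P.S j) / P.m j) ((c - P.S j) / P.m j)
    else 0)
  +
  (∑ j : Fin P.t,
    if P.S ((j : ℕ) + 1) ≤ r ∧ r < P.S ((j : ℕ) + 1) + P.mE ((j : ℕ) + 1)
        ∧ P.S ((j : ℕ) + 1) - P.m j ≤ c ∧ c < P.S ((j : ℕ) + 1)
        ∧ c - (P.S ((j : ℕ) + 1) - P.m j)
            = (P.m j - P.mE ((j : ℕ) + 1)) + (r - P.S ((j : ℕ) + 1)) then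
      (1 : ℂ)
    else 0)

/-- The canonical plane matrix of type `P` with parameters `lam`. -/
def cpm {n : ℕ} (P : StackPartition n) (lam : Params P) : Matrix (Fin n) (Fin n) ℂ :=
  Matrix.of fun r c => cpmEntry P lam r c

/-- The set `𝒫_π` of canonical plane matrices of type `P`. -/
def planeSet {n : ℕ} (P : StackPartition n) : Set (Matrix (Fin n) (Fin n) ℂ) :=
  { A | ∃ lam : Params P, A = cpm P lam }

/-- Similarity (conjugacy) of square complex matrices. -/
def MatrixSimilar {n : ℕ} (A B : Matrix (Fin n) (Fin n) ℂ) : Prop :=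
  ∃ Q : Matrix (Fin n) (Fin n) ℂ, IsUnit Q.det ∧ A * Q = Q * B

/-- The `A`-cyclic subspace `ℂ[A]·v`, spanned by `v, Av, A²v, ...`. -/
def cyclicSpan {n : ℕ} (A : Matrix (Fin n) (Fin n) ℂ) (v : Fin n → ℂ) :
    Submodule ℂ (Fin n → ℂ) :=
  Submodule.span ℂ (Set.range fun k : ℕ => (A ^ k) *ᵥ v)

/-- `ℕ`-indexed entry of the matrix
`G_j = ⊕_{i≤j} C(a_{i,0},...,a_{i,l_i−1}) + Σ_{i<j} E_{s_i+1,s_i}`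
(`0`-indexed `j`; the `i`-th diagonal block is the companion matrix of
`∏_k (X - λ_{i,k})`, and the matrix units sit just below the lower-left
corners of the diagonal blocks). -/
def GEntry {n : ℕ} (P : StackPartition n) (lam : Params P) (j r c : ℕ) : ℂ :=
  (∑ i : Fin P.t,
    if (i : ℕ) ≤ j ∧ P.sE i ≤ r ∧ r < P.sE ((i : ℕ) + 1)
        ∧ P.sE i ≤ c ∧ c < P.sE ((i : ℕ) + 1) then
      genCompE (P.l i) (lam i) (r - P.sE i) (c - P.sE i)
    else 0)
  +
  (∑ i : Fin P.t,
    if 1 ≤ (i : ℕ) ∧ (i : ℕ) ≤ j ∧ r = P.sE i ∧ c + 1 = P.sE i then (1 : ℂ) else 0)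

/-- The `s_j × s_j` matrix `G_j` (`0`-indexed `j`, of size `sE (j+1)`). -/
def Gm {n : ℕ} (P : StackPartition n) (lam : Params P) (j : Fin P.t) :
    Matrix (Fin (P.sE ((j : ℕ) + 1))) (Fin (P.sE ((j : ℕ) + 1))) ℂ :=
  Matrix.of fun r c => GEntry P lam j r c

/-- The multiset `[λ_{j,1},...,λ_{j,l_j}]` of stack `j`. -/
def stackMultiset {n : ℕ} (P : StackPartition n) (lam : Params P) (j : Fin P.t) :
    Multiset ℂ :=
  Multiset.map (lam j) Finset.univ.val

/-- `μ(z, j)`: multiplicity of `z` in the multiset `[λ_{j,1},...,λ_{j,l_j}]`. -/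
def mu {n : ℕ} (P : StackPartition n) (lam : Params P) (z : ℂ) (j : Fin P.t) : ℕ :=
  (stackMultiset P lam j).count z

/-- The multiset of all parameters of stacks `0,...,j` (`0`-indexed), so
`α(z, j) = (lamUpTo P lam j).count z`. -/
def lamUpTo {n : ℕ} (P : StackPartition n) (lam : Params P) (j : ℕ) : Multiset ℂ :=
  ∑ i : Fin P.t, if (i : ℕ) ≤ j then stackMultiset P lam i else 0

/-- Index type for the direct sum of one Jordan block per distinct element of a
multiset `s`, the block for `z` having size `s.count z`. -/
abbrev JordanIdx (s : Multiset ℂ) : Type := Σ z : s.toFinset, Fin (s.count z.val)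

/-- The direct sum `⊕_z J_{s.count z}(z)` over the distinct elements `z` of the
multiset `s` (lower Jordan blocks: eigenvalue on the diagonal, ones on the
subdiagonal). -/
def jordanOfMultiset (s : Multiset ℂ) : Matrix (JordanIdx s) (JordanIdx s) ℂ :=
  Matrix.of fun x y =>
    if x.1 = y.1 then
      (if (x.2 : ℕ) = (y.2 : ℕ) then x.1.val
       else if (x.2 : ℕ) = (y.2 : ℕ) + 1 then 1 else 0)
    else 0

/-- `0`-indexed Weyr characteristic: `weyr B z i = ω_{i+1}` where
`ω_k = dim ker (B - zI)^k − dim ker (B - zI)^{k-1}`. -/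
def weyr {n : ℕ} (B : Matrix (Fin n) (Fin n) ℂ) (z : ℂ) (i : ℕ) : ℕ :=
  Module.finrank ℂ (LinearMap.ker ((B - z • 1).mulVecLin ^ (i + 1)))
    - Module.finrank ℂ (LinearMap.ker ((B - z • 1).mulVecLin ^ i))

/-- `ℕ`-indexed entry of the block diagonal matrix `⊕_j (m_j - m_{j+1}) G_j`
(for each `j`, exactly `m j - m (j+1)` consecutive copies of `G_j`). -/
def dsEntry {n : ℕ} (P : StackPartition n) (lam : Params P) (r c : ℕ) : ℂ :=
  ∑ j : Fin P.t,
    if P.T j ≤ r ∧ r < P.T ((j : ℕ) + 1) ∧ P.T j ≤ c ∧ c < P.T ((j : ℕ) + 1)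
        ∧ (r - P.T j) / P.sE ((j : ℕ) + 1) = (c - P.T j) / P.sE ((j : ℕ) + 1) then
      GEntry P lam j ((r - P.T j) % P.sE ((j : ℕ) + 1)) ((c - P.T j) % P.sE ((j : ℕ) + 1))
    else 0

/-- Index type for `⊕_{j=1}^{t} (m_j - m_{j+1}) (⊕_z J_{α(z,j)}(z))`. -/
abbrev FullJordanIdx {n : ℕ} (P : StackPartition n) (lam : Params P) : Type :=
  Σ j : Fin P.t, Fin (P.m j - P.mE ((j : ℕ) + 1)) × JordanIdx (lamUpTo P lam (j : ℕ))

/-- The matrix `⊕_{j=1}^{t} (m_j - m_{j+1}) (⊕_z J_{α(z,j)}(z))`: for each `j`,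
`m j - m (j+1)` copies of the direct sum, over the distinct `z` with
`α(z,j) = μ(z,1) + ... + μ(z,j) > 0`, of the Jordan blocks `J_{α(z,j)}(z)`. -/
def fullJordan {n : ℕ} (P : StackPartition n) (lam : Params P) :
    Matrix (FullJordanIdx P lam) (FullJordanIdx P lam) ℂ :=
  Matrix.of fun x y =>
    if h : x.1 = y.1 then
      (fun y2 : Fin (P.m x.1 - P.mE ((x.1 : ℕ) + 1)) × JordanIdx (lamUpTo P lam (x.1 : ℕ)) =>
        if x.2.1 = y2.1 then jordanOfMultiset (lamUpTo P lam (x.1 : ℕ)) x.2.2 y2.2 else 0)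
      (cast (congrArg (fun j : Fin P.t =>
        Fin (P.m j - P.mE ((j : ℕ) + 1)) × JordanIdx (lamUpTo P lam (j : ℕ))) h.symm) y.2)
    else 0

end

/-
Index the rows of the `b`-th diagonal block `R ⊗ E_{m_b}` by a copy `a < l_b` and a position
`o < m_b`, and let `r(b, a)` be the row at position `o = i - (m₁ - m_b)`, a genuine position for
`b ≤ j` since `m₁ - m_b ≤ i < m₁`. The block `R ⊗ E` maps `e_{r(b,a)}` to `e_{r(b,a+1)}` for
`a + 1 < l_b`, and `e_{r(b,l_b-1)}` to a combination of the `e_{r(b,·)}`. The subdiagonal block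
`[O | E]` adds `e_{r(b+1,0)}` to the latter when `b < j`; for `b = j` the position of `e_i` is
`< m_j - m_{j+1}`, inside the columns of `O`. So the `s_j` vectors `e_{r(b,a)}`, `b ≤ j`, span an
`A`-invariant subspace containing `e_i = e_{r(0,0)}`, and in increasing row order each of them is
`A` applied to its predecessor modulo earlier ones: they form a basis of `ℂ[A]·e_i`.
-/

section Cyclic

variable {R M ι : Type*} [Ring R] [AddCommGroup M] [Module R M]
  (f : Module.End R M) (v : M)

theorem span_range_pow_apply_le {W : Submodule R M} (hv : v ∈ W) (hW : W ≤ W.comap f) :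
    Submodule.span R (Set.range fun k : ℕ => (f ^ k) v) ≤ W := by
  rw [Submodule.span_le]
  rintro _ ⟨k, rfl⟩
  induction k with
  | zero => simpa using hv
  | succ k ih => simpa [pow_succ'] using hW ih

theorem span_range_pow_apply_le_comap :
    Submodule.span R (Set.range fun k : ℕ => (f ^ k) v) ≤
      (Submodule.span R (Set.range fun k : ℕ => (f ^ k) v)).comap f := by
  rw [Submodule.span_le]
  rintro _ ⟨k, rfl⟩
  exact Submodule.subset_span ⟨k + 1, by simp [pow_succ']⟩

theorem span_range_le_span_range_pow_apply (w : ι → M) (μ : ι → ℕ)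
    (hw : ∀ x, w x = v ∨ ∃ y, μ y < μ x ∧
      w x - f (w y) ∈ Submodule.span R (w '' {z | μ z < μ x})) :
    Submodule.span R (Set.range w) ≤ Submodule.span R (Set.range fun k : ℕ => (f ^ k) v) := by
  set C := Submodule.span R (Set.range fun k : ℕ => (f ^ k) v)
  suffices key : ∀ N x, μ x = N → w x ∈ C by
    rw [Submodule.span_le]
    rintro _ ⟨x, rfl⟩
    exact key _ x rfl
  intro N
  induction N using Nat.strong_induction_on with
  | _ N ih =>
    rintro x rfl
    rcases hw x with hx | ⟨y, hyx, hdiff⟩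
    · exact hx ▸ Submodule.subset_span ⟨0, by simp⟩
    · have hlow : Submodule.span R (w '' {z | μ z < μ x}) ≤ C := by
        rw [Submodule.span_le]
        rintro _ ⟨z, hz, rfl⟩
        exact ih _ hz z rfl
      simpa using C.add_mem (hlow hdiff)
        (span_range_pow_apply_le_comap f v (ih _ hyx y rfl))

theorem span_range_pow_apply_eq (w : ι → M) (μ : ι → ℕ)
    (hv : v ∈ Submodule.span R (Set.range w))
    (hf : ∀ x, f (w x) ∈ Submodule.span R (Set.range w))
    (hw : ∀ x, w x = v ∨ ∃ y, μ y < μ x ∧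
      w x - f (w y) ∈ Submodule.span R (w '' {z | μ z < μ x})) :
    Submodule.span R (Set.range fun k : ℕ => (f ^ k) v) = Submodule.span R (Set.range w) :=
  le_antisymm
    (span_range_pow_apply_le f v hv (Submodule.span_le.mpr <| Set.range_subset_iff.mpr hf))
    (span_range_le_span_range_pow_apply f v w μ hw)

end Cyclic

theorem sum_genCompE_smul_of_succ_lt {M : Type*} [AddCommMonoid M] [Module ℂ M] {l a : ℕ}
    (y : Fin l → ℂ) (f : Fin l → M) (ha : a + 1 < l) :
    ∑ q : Fin l, genCompE l y q a • f q = f ⟨a + 1, ha⟩ := by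
  rw [Finset.sum_eq_single (⟨a + 1, ha⟩ : Fin l)]
  · simp [genCompE, ha, show a < l by omega]
  · intro q _ hq
    have hq' : (q : ℕ) ≠ a + 1 := fun h => hq (Fin.ext h)
    simp [genCompE, hq', show a ≠ l - 1 by omega]
  · simp

namespace StackPartition

variable {n : ℕ} (P : StackPartition n)

@[simp]
theorem mE_coe (b : Fin P.t) : P.mE b = P.m b := dif_pos b.isLt

theorem mE_antitone : Antitone P.mE := by
  intro b b' hbb'
  unfold mE
  split_ifs
  · rcases hbb'.lt_or_eq with hlt | rfl
    · exact (P.m_strictAnti _ _ hlt).le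
    · rfl
  · omega
  · exact Nat.zero_le _
  · rfl

theorem S_succ (b : Fin P.t) : P.S (b + 1) = P.S b + P.l b * P.m b := by
  have hsplit : ∀ c : Fin P.t, (if (c : ℕ) < b + 1 then P.l c * P.m c else 0) =
      (if (c : ℕ) < b then P.l c * P.m c else 0) + if c = b then P.l c * P.m c else 0 := by
    intro c
    rcases lt_trichotomy (c : ℕ) b with h | h | h
    · simp [h, Fin.ne_of_lt h, h.trans (Nat.lt_succ_self _)]
    · simp [Fin.ext h]
    · simp [h.not_gt, (Fin.ne_of_lt h).symm, show ¬ (c : ℕ) < b + 1 by omega]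
  simp only [S, hsplit, Finset.sum_add_distrib, Finset.sum_ite_eq', Finset.mem_univ, if_true]

theorem S_mono : Monotone P.S := fun _ _ h =>
  Finset.sum_le_sum fun c _ => by split_ifs <;> omega

theorem S_succ_le (b : Fin P.t) : P.S (b + 1) ≤ n := by
  calc P.S (b + 1) ≤ P.S P.t := P.S_mono b.isLt
    _ = n := by simp [S, P.sum_eq]

theorem eq_of_mem_block {b b' : Fin P.t} {c : ℕ} (hc : P.S b ≤ c ∧ c < P.S (b + 1))
    (hc' : P.S b' ≤ c ∧ c < P.S (b' + 1)) : b = b' := by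
  by_contra hne
  rcases lt_or_gt_of_ne hne with h | h
  · have := P.S_mono (show (b : ℕ) + 1 ≤ b' from h); omega
  · have := P.S_mono (show (b' : ℕ) + 1 ≤ b from h); omega

/-- Position `o` of copy `a` inside the `b`-th diagonal block `R ⊗ E_{m b}`. -/
def cell (b a o : ℕ) : ℕ := P.S b + a * P.mE b + o

variable {P} {b : Fin P.t} {a o : ℕ}

theorem cell_mem_block (ha : a < P.l b) (ho : o < P.m b) :
    P.S b ≤ P.cell b a o ∧ P.cell b a o < P.S (b + 1) := by
  have : (a + 1) * P.m b ≤ P.l b * P.m b := Nat.mul_le_mul_right _ ha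
  rw [cell, S_succ, mE_coe]
  constructor <;> nlinarith

theorem cell_sub_div (ho : o < P.m b) : (P.cell b a o - P.S b) / P.m b = a := by
  rw [cell, mE_coe, add_assoc, Nat.add_sub_cancel_left, mul_comm,
    Nat.mul_add_div (P.m_pos b), Nat.div_eq_of_lt ho, add_zero]

theorem cell_sub_mod (ho : o < P.m b) : (P.cell b a o - P.S b) % P.m b = o := by
  rw [cell, mE_coe, add_assoc, Nat.add_sub_cancel_left, mul_comm, Nat.mul_add_mod,
    Nat.mod_eq_of_lt ho]

theorem cell_left_injective (ho : o < P.m b) {a' : ℕ} (h : P.cell b a o = P.cell b a' o) :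
    a = a' := by
  rw [← P.cell_sub_div (a := a) ho, h, P.cell_sub_div ho]

theorem mem_block_iff_exists_cell (ho : o < P.m b) (r : ℕ) :
    (P.S b ≤ r ∧ r < P.S (b + 1) ∧ (r - P.S b) % P.m b = o) ↔
      ∃ q < P.l b, r = P.cell b q o := by
  constructor
  · rintro ⟨hr₁, hr₂, hmod⟩
    refine ⟨(r - P.S b) / P.m b, ?_, ?_⟩
    · rw [Nat.div_lt_iff_lt_mul (P.m_pos b)]
      rw [S_succ] at hr₂
      omega
    · have := Nat.div_add_mod (r - P.S b) (P.m b)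
      rw [cell, mE_coe, mul_comm]
      omega
  · rintro ⟨q, hq, rfl⟩
    exact ⟨(P.cell_mem_block hq ho).1, (P.cell_mem_block hq ho).2, P.cell_sub_mod ho⟩

theorem ite_mem_block_eq_sum (ho : o < P.m b) (g : ℕ → ℂ) (r : ℕ) :
    (if P.S b ≤ r ∧ r < P.S (b + 1) ∧ (r - P.S b) % P.m b = o then g ((r - P.S b) / P.m b)
      else 0) = ∑ q : Fin (P.l b), if r = P.cell b q o then g q else 0 := by
  by_cases hr : ∃ q < P.l b, r = P.cell b q o
  · obtain ⟨q, hq, rfl⟩ := hr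
    rw [if_pos ((P.mem_block_iff_exists_cell ho _).2 ⟨q, hq, rfl⟩), P.cell_sub_div ho,
      Finset.sum_eq_single (⟨q, hq⟩ : Fin (P.l b))]
    · simp
    · intro q' _ hq'
      exact if_neg fun h => hq' (Fin.ext (P.cell_left_injective ho h).symm)
    · simp
  · rw [if_neg fun h => hr ((P.mem_block_iff_exists_cell ho r).1 h), Finset.sum_eq_zero]
    intro q _
    exact if_neg fun h => hr ⟨q, q.isLt, h⟩

/-- Column `cell b a o` meets the identity in the block `[O | E_{m (b+1)}]` below the `b`-th
diagonal block at row `r`. -/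
theorem cell_mem_subdiag_iff (ha : a < P.l b) (ho : o < P.m b) (r : ℕ) :
    (P.S (b + 1) ≤ r ∧ r < P.S (b + 1) + P.mE (b + 1) ∧ P.S (b + 1) - P.m b ≤ P.cell b a o ∧
        P.cell b a o < P.S (b + 1) ∧
        P.cell b a o - (P.S (b + 1) - P.m b) = P.m b - P.mE (b + 1) + (r - P.S (b + 1))) ↔
      (a + 1 = P.l b ∧ P.m b - P.mE (b + 1) ≤ o) ∧
        r = P.cell (b + 1) 0 (o + P.mE (b + 1) - P.m b) := by
  have hS := P.S_succ b
  have hmE : P.mE (b + 1) ≤ P.m b := by simpa using P.mE_antitone (Nat.le_succ b)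
  have hlast : a + 1 = P.l b ∧ a * P.m b + P.m b = P.l b * P.m b ∨
      a + 1 < P.l b ∧ a * P.m b + 2 * P.m b ≤ P.l b * P.m b := by
    rcases Nat.lt_or_ge (a + 1) (P.l b) with h | h
    · exact Or.inr ⟨h, by nlinarith⟩
    · exact Or.inl ⟨by omega, by rw [← show a + 1 = P.l b by omega]; ring⟩
  simp only [cell, mE_coe, zero_mul, add_zero]
  omega

end StackPartition

/-- The standard basis vector `e_c` of `ℂ^n` for `c < n`, and `0` for `c ≥ n`. -/
def stdVec (n c : ℕ) : Fin n → ℂ := fun r => if (r : ℕ) = c then 1 else 0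

theorem stdVec_eq_single {n c : ℕ} (hc : c < n) : stdVec n c = Pi.single ⟨c, hc⟩ 1 := by
  ext r
  simp [stdVec, Pi.single_apply, Fin.ext_iff]

theorem mulVec_stdVec {n c : ℕ} (A : Matrix (Fin n) (Fin n) ℂ) (hc : c < n) :
    A *ᵥ stdVec n c = fun r => A r ⟨c, hc⟩ := by
  rw [stdVec_eq_single hc]
  ext r
  simp

theorem cpm_mulVec_stdVec_cell {n : ℕ} (P : StackPartition n) (lam : Params P) {b : Fin P.t}
    {a o : ℕ} (ha : a < P.l b) (ho : o < P.m b) :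
    cpm P lam *ᵥ stdVec n (P.cell b a o) =
      ∑ q : Fin (P.l b), genCompE (P.l b) (lam b) q a • stdVec n (P.cell b q o) +
        if a + 1 = P.l b ∧ P.m b - P.mE (b + 1) ≤ o then
          stdVec n (P.cell (b + 1) 0 (o + P.mE (b + 1) - P.m b))
        else 0 := by
  obtain ⟨hc₁, hc₂⟩ := P.cell_mem_block ha ho
  ext r
  rw [mulVec_stdVec _ (hc₂.trans_le (P.S_succ_le b)), Pi.add_apply]
  simp only [cpm, Matrix.of_apply, cpmEntry]
  congr 1
  · rw [Finset.sum_eq_single b (fun b' _ hb' => if_neg fun h =>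
      hb' (P.eq_of_mem_block ⟨h.2.2.1, h.2.2.2.1⟩ ⟨hc₁, hc₂⟩)) (by simp),
      P.cell_sub_mod ho, P.cell_sub_div ho]
    simp only [Finset.sum_apply, Pi.smul_apply, stdVec, smul_eq_mul, mul_ite, mul_one, mul_zero,
      hc₁, hc₂, true_and]
    exact P.ite_mem_block_eq_sum ho (fun q => genCompE (P.l b) (lam b) q a) r
  · rw [Finset.sum_eq_single b]
    · simp only [P.cell_mem_subdiag_iff ha ho, ite_and]
      split_ifs <;> simp [stdVec, *]
    · intro b' _ hb'
      refine if_neg fun h => hb' (P.eq_of_mem_block ⟨?_, h.2.2.2.1⟩ ⟨hc₁, hc₂⟩)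
      have := P.S_succ b'
      have := Nat.le_mul_of_pos_left (P.m b') (P.l_pos b')
      omega
    · simp

namespace StackPartition

variable {n : ℕ} (P : StackPartition n)

def cyclicRow (i b a : ℕ) : ℕ := P.cell b a (i - (P.mE 0 - P.mE b))

theorem cyclicRow_zero_zero (i : ℕ) : P.cyclicRow i 0 0 = i := by
  simp [cyclicRow, cell, S]

theorem cyclicRow_lt_cyclicRow_succ (i : ℕ) (b : Fin P.t) (a : ℕ) :
    P.cyclicRow i b a < P.cyclicRow i b (a + 1) := by
  have := P.m_pos b
  simp only [cyclicRow, cell, mE_coe]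
  nlinarith

theorem S_le_cyclicRow (i b a : ℕ) : P.S b ≤ P.cyclicRow i b a :=
  (Nat.le_add_right _ _).trans (Nat.le_add_right _ _)

variable {i : ℕ} {j : Fin P.t} (h1 : P.mE 0 - P.m j ≤ i) (h2 : i < P.mE 0 - P.mE (j + 1))
include h1 h2

theorem cyclicRow_offset_lt {b : Fin P.t} (hb : b ≤ j) : i - (P.mE 0 - P.mE b) < P.m b := by
  have := P.mE_antitone (Nat.zero_le b)
  have := P.mE_antitone (show (b : ℕ) ≤ j from hb)
  simp only [mE_coe] at *
  omega

theorem cyclicRow_mem_block {b : Fin P.t} (hb : b ≤ j) {a : ℕ} (ha : a < P.l b) :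
    P.S b ≤ P.cyclicRow i b a ∧ P.cyclicRow i b a < P.S (b + 1) :=
  P.cell_mem_block ha (P.cyclicRow_offset_lt h1 h2 hb)

theorem cyclicRow_lt {b : Fin P.t} (hb : b ≤ j) {a : ℕ} (ha : a < P.l b) :
    P.cyclicRow i b a < n :=
  (P.cyclicRow_mem_block h1 h2 hb ha).2.trans_le (P.S_succ_le b)

end StackPartition

open StackPartition

theorem cpm_mulVec_stdVec_cyclicRow {n : ℕ} (P : StackPartition n) (lam : Params P) {i : ℕ}
    {j : Fin P.t} (h1 : P.mE 0 - P.m j ≤ i) (h2 : i < P.mE 0 - P.mE (j + 1)) {b : Fin P.t}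
    (hb : b ≤ j) {a : ℕ} (ha : a < P.l b) :
    cpm P lam *ᵥ stdVec n (P.cyclicRow i b a) =
      ∑ q : Fin (P.l b), genCompE (P.l b) (lam b) q a • stdVec n (P.cyclicRow i b q) +
        if a + 1 = P.l b ∧ (b : ℕ) < j then stdVec n (P.cyclicRow i (b + 1) 0) else 0 := by
  unfold cyclicRow
  rw [cpm_mulVec_stdVec_cell P lam ha (P.cyclicRow_offset_lt h1 h2 hb)]
  have := P.mE_coe b
  have := P.mE_coe j
  have := P.mE_antitone (Nat.zero_le b)
  have := P.mE_antitone (Nat.le_add_right b 1)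
  have := P.mE_antitone (show (b : ℕ) ≤ j from hb)
  congr 1
  rcases hb.lt_or_eq with hbj | rfl
  · have := P.mE_antitone (show (b : ℕ) + 1 ≤ j from hbj)
    split_ifs <;> first | rfl | (exfalso; omega) | (congr 2; omega)
  · split_ifs <;> first | rfl | (exfalso; omega)

theorem cyclicSpan_eq_span_range_toLin'_pow {n : ℕ} (A : Matrix (Fin n) (Fin n) ℂ)
    (v : Fin n → ℂ) :
    cyclicSpan A v = Submodule.span ℂ (Set.range fun k : ℕ => (Matrix.toLin' A ^ k) v) := by
  simp [cyclicSpan, ← Matrix.toLin'_pow]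

section CyclicBasis

variable {n : ℕ} (P : StackPartition n) (lam : Params P) {i : ℕ} {j : Fin P.t}

abbrev CyclicIndex (P : StackPartition n) (j : Fin P.t) : Type :=
  Σ b : {b : Fin P.t // b ≤ j}, Fin (P.l b)

def cyclicBasis (i : ℕ) (j : Fin P.t) (x : CyclicIndex P j) : Fin n → ℂ :=
  stdVec n (P.cyclicRow i x.1 x.2)

theorem card_cyclicIndex : Fintype.card (CyclicIndex P j) = P.sE (j + 1) := by
  rw [Fintype.card_sigma, StackPartition.sE, ← Finset.sum_filter]
  simp only [Fintype.card_fin]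
  refine (Finset.sum_subtype (p := (· ≤ j)) _ (fun b => ?_) _).symm
  simp only [Finset.mem_filter, Finset.mem_univ, true_and, Nat.lt_succ_iff, Fin.le_def]

variable (h1 : P.mE 0 - P.m j ≤ i) (h2 : i < P.mE 0 - P.mE (j + 1))
include h1 h2

theorem cyclicRow_injective :
    Function.Injective fun x : CyclicIndex P j => P.cyclicRow i x.1 x.2 := by
  rintro ⟨⟨b, hb⟩, a⟩ ⟨⟨b', hb'⟩, a'⟩ (h : P.cyclicRow i b a = P.cyclicRow i b' a')
  obtain rfl : b = b' := P.eq_of_mem_block (P.cyclicRow_mem_block h1 h2 hb a.isLt)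
    (h ▸ P.cyclicRow_mem_block h1 h2 hb' a'.isLt)
  obtain rfl : a = a' := Fin.ext (P.cell_left_injective (P.cyclicRow_offset_lt h1 h2 hb) h)
  rfl

theorem linearIndependent_cyclicBasis : LinearIndependent ℂ (cyclicBasis P i j) := by
  have hbasis : cyclicBasis P i j = Pi.basisFun ℂ (Fin n) ∘
      fun x => ⟨P.cyclicRow i x.1 x.2, P.cyclicRow_lt h1 h2 x.1.2 x.2.isLt⟩ :=
    funext fun x => by simp [cyclicBasis, stdVec_eq_single (P.cyclicRow_lt h1 h2 x.1.2 x.2.isLt)]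
  rw [hbasis]
  exact (Pi.basisFun ℂ (Fin n)).linearIndependent.comp _
    fun x y h => cyclicRow_injective P h1 h2 (congrArg Fin.val h)

theorem cpm_mulVec_cyclicBasis_mem_span (x : CyclicIndex P j) :
    cpm P lam *ᵥ cyclicBasis P i j x ∈ Submodule.span ℂ (Set.range (cyclicBasis P i j)) := by
  obtain ⟨⟨b, hb⟩, ⟨a, ha⟩⟩ := x
  rw [cyclicBasis, cpm_mulVec_stdVec_cyclicRow P lam h1 h2 hb ha]
  refine add_mem (Submodule.sum_mem _ fun q _ =>
    Submodule.smul_mem _ _ (Submodule.subset_span ⟨⟨⟨b, hb⟩, q⟩, rfl⟩)) ?_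
  split_ifs with hlast
  · exact Submodule.subset_span ⟨⟨⟨⟨b + 1, by omega⟩, hlast.2⟩, ⟨0, P.l_pos _⟩⟩, rfl⟩
  · exact zero_mem _

theorem cyclicBasis_eq_or_sub_cpm_mulVec_mem_span (x : CyclicIndex P j) :
    cyclicBasis P i j x = stdVec n i ∨ ∃ y, P.cyclicRow i y.1 y.2 < P.cyclicRow i x.1 x.2 ∧
      cyclicBasis P i j x - cpm P lam *ᵥ cyclicBasis P i j y ∈ Submodule.span ℂ
        (cyclicBasis P i j '' {z | P.cyclicRow i z.1 z.2 < P.cyclicRow i x.1 x.2}) := by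
  obtain ⟨⟨⟨b, hbt⟩, hb⟩, ⟨_ | a, ha⟩⟩ := x
  · rcases b with _ | b
    · left
      simp [cyclicBasis, P.cyclicRow_zero_zero]
    · right
      have hb' : (⟨b, by omega⟩ : Fin P.t) ≤ j := Nat.le_of_succ_le hb
      have hl := Nat.sub_lt (P.l_pos ⟨b, by omega⟩) one_pos
      have hlow (q : Fin (P.l ⟨b, by omega⟩)) : P.cyclicRow i b q < P.cyclicRow i (b + 1) 0 :=
        (P.cyclicRow_mem_block h1 h2 hb' q.isLt).2.trans_le (P.S_le_cyclicRow _ _ _)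
      refine ⟨⟨⟨⟨b, by omega⟩, hb'⟩, ⟨_, hl⟩⟩, hlow _, ?_⟩
      simp only [cyclicBasis]
      rw [cpm_mulVec_stdVec_cyclicRow P lam h1 h2 hb' hl,
        if_pos ⟨Nat.sub_add_cancel (P.l_pos _), Nat.lt_of_succ_le hb⟩, sub_add_cancel_right]
      exact neg_mem (Submodule.sum_mem _ fun q _ => Submodule.smul_mem _ _
        (Submodule.subset_span ⟨⟨⟨⟨b, by omega⟩, hb'⟩, q⟩, hlow q, rfl⟩))
  · right
    refine ⟨⟨⟨⟨b, hbt⟩, hb⟩, ⟨a, by omega⟩⟩, P.cyclicRow_lt_cyclicRow_succ i ⟨b, hbt⟩ a, ?_⟩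
    simp only [cyclicBasis]
    rw [cpm_mulVec_stdVec_cyclicRow P lam h1 h2 hb (Nat.lt_of_succ_lt ha),
      if_neg fun h => ha.ne h.1, sum_genCompE_smul_of_succ_lt _ _ ha, add_zero, sub_self]
    exact zero_mem _

theorem cyclicSpan_cpm_eq_span_cyclicBasis :
    cyclicSpan (cpm P lam) (stdVec n i) = Submodule.span ℂ (Set.range (cyclicBasis P i j)) := by
  rw [cyclicSpan_eq_span_range_toLin'_pow]
  refine span_range_pow_apply_eq _ _ _ (fun x => P.cyclicRow i x.1 x.2) ?_
    (cpm_mulVec_cyclicBasis_mem_span P lam h1 h2)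
    (cyclicBasis_eq_or_sub_cpm_mulVec_mem_span P lam h1 h2)
  refine Submodule.subset_span ⟨⟨⟨⟨0, j.pos⟩, Nat.zero_le _⟩, ⟨0, P.l_pos _⟩⟩, ?_⟩
  simp [cyclicBasis, P.cyclicRow_zero_zero]

end CyclicBasis

theorem statement3_general (n : ℕ) (P : StackPartition n) (lam : Params P)
    (j : Fin P.t) (i : Fin n)
    (h1 : P.mE 0 - P.m j ≤ (i : ℕ)) (h2 : (i : ℕ) < P.mE 0 - P.mE ((j : ℕ) + 1)) :
    Module.finrank ℂ (cyclicSpan (cpm P lam) (Pi.single i 1)) = P.sE ((j : ℕ) + 1) := by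
  rw [← stdVec_eq_single i.isLt, cyclicSpan_cpm_eq_span_cyclicBasis P lam h1 h2,
    finrank_span_eq_card (linearIndependent_cyclicBasis P h1 h2), card_cyclicIndex]

/-- For a canonical plane matrix `A ∈ 𝒫_π` and
`V_i = ℂ[A]·e_i`: if `i ∈ P_j = {m₁ − m_j + 1, ..., m₁ − m_{j+1}}` (here
`0`-indexed: `m₁ − m_j ≤ i < m₁ − m_{j+1}`), then `dim V_i = s_j`. -/
theorem statement3 (n : ℕ) (hn : 2 ≤ n) (P : StackPartition n) (lam : Params P)
    (j : Fin P.t) (i : Fin n)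
    (h1 : P.mE 0 - P.m j ≤ (i : ℕ)) (h2 : (i : ℕ) < P.mE 0 - P.mE ((j : ℕ) + 1)) :
    Module.finrank ℂ (cyclicSpan (cpm P lam) (Pi.single i 1)) = P.sE ((j : ℕ) + 1) :=
  statement3_general n P lam j i h1 h2
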